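/- Let p1, p2 ∈ ℝ^M be strictly positive probability vectors with p1 ≠ p2, let ε1, ε2 > 0, let v* = (p1 − p2)/‖p1 − p2‖, and let S2 = Σ_{i=1}^M (v*_i)²/p2_i. If (Σ_{i=1}^M (v*_i)²·p1_i/(p2_i)²)/S2 < ε1/ε2, then the supremum of Q over the feasible set of the quadratic vector problem equals ε2·Σ_{i=1}^M (p1_i − p2_i)²/p2_i. -/

import Mathlib

open Real

noncomputable section

/-- Objective of the quadratic vector problem:
`Q(α) = (1/2)·(Σ_i (p1_i − p2_i) α_i)²`. -/
def Qobj {M : ℕ} (p1 p2 : Fin M → ℝ) (α : Fin M → ℝ) : ℝ :=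
  (1 / 2) * (∑ i, (p1 i - p2 i) * α i) ^ 2

/-- Feasible set of the quadratic vector problem:
`(1/2)·Σ_i p1_i α_i² ≤ ε1` and `(1/2)·Σ_i p2_i α_i² ≤ ε2`. -/
def QFeas {M : ℕ} (p1 p2 : Fin M → ℝ) (ε1 ε2 : ℝ) : Set (Fin M → ℝ) :=
  {α | (1 / 2) * ∑ i, p1 i * (α i) ^ 2 ≤ ε1 ∧ (1 / 2) * ∑ i, p2 i * (α i) ^ 2 ≤ ε2}

/-- Objective of the matrix problem:
`F(A) = (1/2)·‖Σ_i (p1_i − p2_i) A_i‖²` (squared Euclidean norm of the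
indicated combination of the rows of `A`). -/
def Fobj {M : ℕ} (p1 p2 : Fin M → ℝ) (A : Matrix (Fin M) (Fin M) ℝ) : ℝ :=
  (1 / 2) * ∑ j, (∑ i, (p1 i - p2 i) * A i j) ^ 2

/-- Feasible set of the matrix problem:
`(1/2)·Σ_i p1_i ‖A_i‖² ≤ ε1`, `(1/2)·Σ_i p2_i ‖A_i‖² ≤ ε2`, and
`Σ_j A_{ij} √(w0_j) = 0` for every `i`. -/
def MFeas {M : ℕ} (p1 p2 : Fin M → ℝ) (ε1 ε2 : ℝ) (w0 : Fin M → ℝ) :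
    Set (Matrix (Fin M) (Fin M) ℝ) :=
  {A | (1 / 2) * ∑ i, p1 i * ∑ j, (A i j) ^ 2 ≤ ε1 ∧
       (1 / 2) * ∑ i, p2 i * ∑ j, (A i j) ^ 2 ≤ ε2 ∧
       ∀ i, ∑ j, A i j * Real.sqrt (w0 j) = 0}

open Finset

/- By Cauchy–Schwarz with weights `p2`, `(Σ (p1 - p2) α)² ≤ (Σ (p1 - p2)²/p2)·(Σ p2 α²)`, so the
second constraint alone bounds `Q` by `ε2·S` with `S = Σ (p1 - p2)²/p2`. Equality holds along
`α ∝ (p1 - p2)/p2`, scaled so that the second constraint is tight; the first constraint then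
reads `ε2·T/S ≤ ε1` with `T = Σ (p1 - p2)² p1/p2²`, which is the hypothesis, since `v*` is
`p1 - p2` up to a positive factor that cancels from the ratio. -/

lemma sq_sum_mul_le_sum_sq_div_mul_sum_mul_sq {ι : Type*} (s : Finset ι) {w : ι → ℝ}
    (hw : ∀ i ∈ s, 0 < w i) (d α : ι → ℝ) :
    (∑ i ∈ s, d i * α i) ^ 2 ≤ (∑ i ∈ s, d i ^ 2 / w i) * ∑ i ∈ s, w i * α i ^ 2 :=
  sum_sq_le_sum_mul_sum_of_sq_le_mul s
    (fun i hi => div_nonneg (sq_nonneg _) (hw i hi).le)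
    (fun i hi => mul_nonneg (hw i hi).le (sq_nonneg _))
    (fun i hi => by field_simp [(hw i hi).ne']; rfl)

section QuadraticVectorProblem

variable {M : ℕ} {p1 p2 : Fin M → ℝ}

lemma Qobj_le_of_mem_QFeas (hp2 : ∀ i, 0 < p2 i) {ε1 ε2 : ℝ} {α : Fin M → ℝ}
    (hα : α ∈ QFeas p1 p2 ε1 ε2) :
    Qobj p1 p2 α ≤ ε2 * ∑ i, (p1 i - p2 i) ^ 2 / p2 i := by
  have hS : 0 ≤ ∑ i, (p1 i - p2 i) ^ 2 / p2 i :=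
    sum_nonneg fun i _ => div_nonneg (sq_nonneg _) (hp2 i).le
  have hCS := sq_sum_mul_le_sum_sq_div_mul_sum_mul_sq univ (fun i _ => hp2 i)
    (fun i => p1 i - p2 i) α
  have h2 := mul_le_mul_of_nonneg_left hα.2 hS
  unfold Qobj
  linarith

lemma sum_sq_sub_div_pos (hp2 : ∀ i, 0 < p2 i) (hne : p1 ≠ p2) :
    0 < ∑ i, (p1 i - p2 i) ^ 2 / p2 i := by
  obtain ⟨i, hi⟩ := Function.ne_iff.mp hne
  exact sum_pos' (fun j _ => div_nonneg (sq_nonneg _) (hp2 j).le)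
    ⟨i, mem_univ i, div_pos (sq_pos_of_ne_zero (sub_ne_zero.mpr hi)) (hp2 i)⟩

lemma Qobj_and_constraint_sums_at_mul_sub_div (hp2 : ∀ i, 0 < p2 i) (c : ℝ) :
    Qobj p1 p2 (fun i => c * (p1 i - p2 i) / p2 i) =
        1 / 2 * (c * ∑ i, (p1 i - p2 i) ^ 2 / p2 i) ^ 2 ∧
      ∑ i, p1 i * (c * (p1 i - p2 i) / p2 i) ^ 2 =
        c ^ 2 * ∑ i, (p1 i - p2 i) ^ 2 * p1 i / p2 i ^ 2 ∧
      ∑ i, p2 i * (c * (p1 i - p2 i) / p2 i) ^ 2 =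
        c ^ 2 * ∑ i, (p1 i - p2 i) ^ 2 / p2 i := by
  refine ⟨?_, ?_, ?_⟩
  · unfold Qobj
    rw [mul_sum]
    congr 2
    refine sum_congr rfl fun i _ => ?_
    field_simp [(hp2 i).ne']
  all_goals
    rw [mul_sum]
    refine sum_congr rfl fun i _ => ?_
    field_simp [(hp2 i).ne']

lemma isGreatest_Qobj_image_QFeas (hp2 : ∀ i, 0 < p2 i) (hne : p1 ≠ p2) {ε1 ε2 : ℝ}
    (hε2 : 0 ≤ ε2)
    (hactive : ε2 * ∑ i, (p1 i - p2 i) ^ 2 * p1 i / p2 i ^ 2 ≤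
      ε1 * ∑ i, (p1 i - p2 i) ^ 2 / p2 i) :
    IsGreatest (Qobj p1 p2 '' QFeas p1 p2 ε1 ε2) (ε2 * ∑ i, (p1 i - p2 i) ^ 2 / p2 i) := by
  set S := ∑ i, (p1 i - p2 i) ^ 2 / p2 i
  have hS : 0 < S := sum_sq_sub_div_pos hp2 hne
  set c := √(2 * ε2 / S)
  have hc : c ^ 2 = 2 * ε2 / S := sq_sqrt (by positivity)
  obtain ⟨hQ, h1, h2⟩ := Qobj_and_constraint_sums_at_mul_sub_div (p1 := p1) hp2 c
  refine ⟨⟨fun i => c * (p1 i - p2 i) / p2 i, ⟨?_, ?_⟩, ?_⟩, ?_⟩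
  · beta_reduce
    rw [h1, hc]
    calc 1 / 2 * (2 * ε2 / S * _) = ε2 * _ / S := by ring
      _ ≤ ε1 := (div_le_iff₀ hS).mpr hactive
  · beta_reduce
    rw [h2, hc, div_mul_cancel₀ _ hS.ne']
    linarith
  · rw [hQ, mul_pow, hc]
    field_simp
    rfl
  · rintro _ ⟨α, hα, rfl⟩
    exact Qobj_le_of_mem_QFeas hp2 hα

end QuadraticVectorProblem

lemma sum_div_sqrt_sq_mul_div_sum_div_sqrt_sq_mul {ι : Type*} (s : Finset ι) (d a b : ι → ℝ)
    (hd : ∑ i ∈ s, d i ^ 2 ≠ 0) :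
    (∑ i ∈ s, (d i / √(∑ k ∈ s, d k ^ 2)) ^ 2 * a i) /
        ∑ i ∈ s, (d i / √(∑ k ∈ s, d k ^ 2)) ^ 2 * b i =
      (∑ i ∈ s, d i ^ 2 * a i) / ∑ i ∈ s, d i ^ 2 * b i := by
  have hN : 0 ≤ ∑ k ∈ s, d k ^ 2 := sum_nonneg fun k _ => sq_nonneg _
  simp only [div_pow, sq_sqrt hN, div_mul_eq_mul_div, ← sum_div]
  exact div_div_div_cancel_right₀ hd _ _

theorem sup_value_second_constraint_active_general {M : ℕ}
    (p1 p2 : Fin M → ℝ)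
    (hp2 : ∀ i, 0 < p2 i)
    (hne : p1 ≠ p2)
    (ε1 ε2 : ℝ) (hε2 : 0 < ε2)
    (vs : Fin M → ℝ)
    (hvs : ∀ i, vs i = (p1 i - p2 i) / Real.sqrt (∑ k, (p1 k - p2 k) ^ 2))
    (S2 : ℝ) (hS2 : S2 = ∑ i, (vs i) ^ 2 / p2 i)
    (hactive : (∑ i, (vs i) ^ 2 * p1 i / (p2 i) ^ 2) / S2 < ε1 / ε2) :
    sSup (Qobj p1 p2 '' QFeas p1 p2 ε1 ε2) =
      ε2 * ∑ i, (p1 i - p2 i) ^ 2 / p2 i := by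
  have hN : ∑ k, (p1 k - p2 k) ^ 2 ≠ 0 := fun h => hne <| funext fun i => sub_eq_zero.mp <|
    pow_eq_zero_iff two_ne_zero |>.mp <|
      (sum_eq_zero_iff_of_nonneg fun _ _ => sq_nonneg _).mp h i (mem_univ i)
  have hratio := sum_div_sqrt_sq_mul_div_sum_div_sqrt_sq_mul univ (fun i => p1 i - p2 i)
    (fun i => p1 i / p2 i ^ 2) (fun i => 1 / p2 i) hN
  simp only [← mul_div_assoc, mul_one, ← hvs, ← hS2] at hratio
  rw [hratio, div_lt_div_iff₀ (sum_sq_sub_div_pos hp2 hne) hε2] at hactive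
  refine (isGreatest_Qobj_image_QFeas hp2 hne hε2.le ?_).csSup_eq
  linarith

/-- if `(Σ_i (v*_i)² p1_i/(p2_i)²)/S2 < ε1/ε2` with
`S2 = Σ_i (v*_i)²/p2_i`, then the supremum of `Q` over the feasible set of the
quadratic vector problem equals `ε2·Σ_i (p1_i − p2_i)²/p2_i`. -/
theorem sup_value_second_constraint_active {M : ℕ}
    (p1 p2 : Fin M → ℝ)
    (hp1 : ∀ i, 0 < p1 i) (hp1s : ∑ i, p1 i = 1)
    (hp2 : ∀ i, 0 < p2 i) (hp2s : ∑ i, p2 i = 1)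
    (hne : p1 ≠ p2)
    (ε1 ε2 : ℝ) (hε1 : 0 < ε1) (hε2 : 0 < ε2)
    (vs : Fin M → ℝ)
    (hvs : ∀ i, vs i = (p1 i - p2 i) / Real.sqrt (∑ k, (p1 k - p2 k) ^ 2))
    (S2 : ℝ) (hS2 : S2 = ∑ i, (vs i) ^ 2 / p2 i)
    (hactive : (∑ i, (vs i) ^ 2 * p1 i / (p2 i) ^ 2) / S2 < ε1 / ε2) :
    sSup (Qobj p1 p2 '' QFeas p1 p2 ε1 ε2) =
      ε2 * ∑ i, (p1 i - p2 i) ^ 2 / p2 i :=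
  sup_value_second_constraint_active_general p1 p2 hp2 hne ε1 ε2 hε2 vs hvs S2 hS2 hactive
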